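/- arXiv:1604.04369 — 5 statements merged into one kernel-verified Lean document; each statement's English description precedes it below -/
import Mathlib

section
/- The Ricci tensor ρ of the oscillator Lie algebra with bi-invariant Lorentzian metric, computed in the basis (P, X₁, Y₁, Q), has ρ(Q,Q) = 1/2 and all other components zero. -/
/-! The metric is bi-invariant, so `∇ₓ y = ½ [x, y]` and the Jacobi identity collapses the
curvature to `R(x, y) z = -¼ [[x, y], z]`. Hence `ρ(x, y) = -¼ tr (ad y ∘ ad x)` is `-¼` times the
Killing form, which is `-2 x_Q y_Q`: `ad Q` rotates the plane spanned by `X₁, Y₁`, so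
`tr (ad Q)² = -2`. -/

noncomputable section

/-- Bracket of the oscillator Lie algebra on ℝ⁴, coordinates w.r.t. basis (P, X₁, Y₁, Q):
[X₁,Y₁]=P, [Q,X₁]=Y₁, [Q,Y₁]=-X₁. -/
def obr (x y : Fin 4 → ℝ) : Fin 4 → ℝ :=
  ![x 1 * y 2 - x 2 * y 1, x 2 * y 3 - x 3 * y 2, x 3 * y 1 - x 1 * y 3, 0]

/-- The bi-invariant Lorentzian form: g(P,Q)=1, g(X₁,X₁)=g(Y₁,Y₁)=1, others zero. -/
def og (x y : Fin 4 → ℝ) : ℝ := x 0 * y 3 + x 3 * y 0 + x 1 * y 1 + x 2 * y 2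

/-- standard basis vectors -/
def stdv (i : Fin 4) : Fin 4 → ℝ := fun j => if j = i then 1 else 0

def oP : Fin 4 → ℝ := stdv 0
def oX : Fin 4 → ℝ := stdv 1
def oY : Fin 4 → ℝ := stdv 2
def oQ : Fin 4 → ℝ := stdv 3

/-- Levi-Civita connection of a bi-invariant metric: ∇ₓ y = (1/2)[x,y]. -/
def nab (x y : Fin 4 → ℝ) : Fin 4 → ℝ := (1/2 : ℝ) • obr x y

/-- Curvature tensor R(x,y)z = ∇ₓ∇_y z − ∇_y∇ₓ z − ∇_{[x,y]} z. -/
def Rcur (x y z : Fin 4 → ℝ) : Fin 4 → ℝ :=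
  nab x (nab y z) - nab y (nab x z) - nab (obr x y) z

/-- Ricci tensor ρ(x,y) = tr (z ↦ R(z,x)y). -/
def ric (x y : Fin 4 → ℝ) : ℝ := ∑ i, Rcur (stdv i) x y i

theorem obr_smul_right (c : ℝ) (x y : Fin 4 → ℝ) : obr x (c • y) = c • obr x y := by
  ext i; fin_cases i <;> simp [obr] <;> ring

theorem obr_jacobi (x y z : Fin 4 → ℝ) :
    obr x (obr y z) - obr y (obr x z) = obr (obr x y) z := by
  ext i; fin_cases i <;> simp [obr] <;> ring

theorem Rcur_eq_neg_quarter_bracket (x y z : Fin 4 → ℝ) :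
    Rcur x y z = -(1 / 4 : ℝ) • obr (obr x y) z := by
  simp only [Rcur, nab, obr_smul_right, ← obr_jacobi]
  module

theorem ric_eq (x y : Fin 4 → ℝ) : ric x y = x 3 * y 3 / 2 := by
  simp only [ric, Fin.sum_univ_four, Rcur_eq_neg_quarter_bracket, Pi.smul_apply, smul_eq_mul, obr,
    stdv, Matrix.cons_val, Fin.reduceEq, ↓reduceIte]
  ring

theorem oscillator_ricci :
    ric oQ oQ = 1/2 ∧
    ∀ i j : Fin 4, (i, j) ≠ ((3 : Fin 4), (3 : Fin 4)) → ric (stdv i) (stdv j) = 0 := by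
  refine ⟨by simp [ric_eq, oQ, stdv], fun i j hij => ?_⟩
  obtain hi | hj : i ≠ 3 ∨ j ≠ 3 := by
    contrapose! hij
    rw [hij.1, hij.2]
  · simp [ric_eq, stdv, hi.symm]
  · simp [ric_eq, stdv, hj.symm]
end
end

section
/- There is no left-invariant Ricci soliton structure on the oscillator group with its bi-invariant Lorentzian metric: there exist no real number ς and element X of the oscillator Lie algebra such that (L_X g)(y,z) = ς g(y,z) − ρ(y,z) for all y,z ∈ 𝔤, where (L_X g)(y,z) = g(∇_y X, z) + g(y, ∇_z X). -/
noncomputable section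

/-
Proof idea: for a bi-invariant metric every left-invariant vector field is Killing, since
g([y,X],z) + g(y,[z,X]) = 0 by ad-invariance of g. The soliton equation therefore forces
ρ = ς g, which fails at (Q,Q): there ρ(Q,Q) = 1/2 while Q is null.
-/

theorem og_comm (x y : Fin 4 → ℝ) : og x y = og y x := by
  simp only [og]
  ring

theorem obr_anticomm (x y : Fin 4 → ℝ) : obr x y = -obr y x := by
  simp only [obr, Matrix.neg_cons, Matrix.neg_empty, neg_sub, neg_zero, mul_comm (x _)]

theorem og_neg_left (x y : Fin 4 → ℝ) : og (-x) y = -og x y := by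
  simp only [og, Pi.neg_apply]
  ring

theorem og_obr (x y z : Fin 4 → ℝ) : og (obr x y) z = og x (obr y z) := by
  simp only [og, obr, Matrix.cons_val_zero, Matrix.cons_val_one, Matrix.cons_val, zero_mul,
    mul_zero, add_zero, zero_add]
  ring

theorem og_nab_add_og_nab (X y z : Fin 4 → ℝ) : og (nab y X) z + og y (nab z X) = 0 := by
  have hy : og (obr y X) z = -og X (obr y z) := by
    rw [obr_anticomm, og_neg_left, og_obr]
  have hz : og y (obr z X) = og X (obr y z) := by
    rw [og_comm, og_obr, og_comm, og_obr]
  simp only [nab, og, Pi.smul_apply, smul_eq_mul] at hy hz ⊢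
  linear_combination (1 / 2 : ℝ) * (hy + hz)

theorem og_oQ_oQ : og oQ oQ = 0 := by
  simp [og, oQ, stdv]

theorem ric_oQ_oQ : ric oQ oQ = 1 / 2 := by
  simp [ric, Rcur, nab, obr, oQ, stdv, Fin.sum_univ_four]
  norm_num

theorem oscillator_no_invariant_ricci_soliton :
    ¬ ∃ (ς : ℝ) (X : Fin 4 → ℝ),
      ∀ y z : Fin 4 → ℝ, og (nab y X) z + og y (nab z X) = ς * og y z - ric y z := by
  rintro ⟨ς, X, h⟩
  have hQ := h oQ oQ
  rw [og_nab_add_og_nab, og_oQ_oQ, ric_oQ_oQ] at hQ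
  norm_num at hQ
end
end

section
/- If X = aP + bX₁ + cY₁ + dQ spans a null parallel line field of the oscillator Lie algebra, i.e. g(X,X)=0 and for each basis vector e there exists a scalar ω with ∇_e X = ω X, then b = c = d = 0; hence the only invariant parallel degenerate line field is spanned by P. -/
noncomputable section

/-! Since `[X₁, X] = cP - dY₁`, the equation `∇_{X₁} X = ω X` forces `ω d = 0` (the `Q`-component)
and `ω c = -d/2` (the `Y₁`-component), hence `d = 0`. The null condition `2ad + b² + c² = 0`
then reduces to `b² + c² = 0`. -/

lemma nab_stdv_one_apply_two (y : Fin 4 → ℝ) : nab (stdv 1) y 2 = -(y 3 / 2) := by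
  simp [nab, obr, stdv, div_eq_inv_mul]

lemma nab_apply_three (x y : Fin 4 → ℝ) : nab x y 3 = 0 := by
  simp [nab, obr]

lemma apply_three_eq_zero_of_nab_stdv_one_eq_smul {X : Fin 4 → ℝ} {ω : ℝ}
    (h : nab (stdv 1) X = ω • X) : X 3 = 0 := by
  have hQ : 0 = ω * X 3 := by simpa [nab_apply_three] using congrFun h 3
  have hY : -(X 3 / 2) = ω * X 2 := by simpa [nab_stdv_one_apply_two] using congrFun h 2
  rcases mul_eq_zero.mp hQ.symm with hω | hX3
  · simpa [hω] using hY
  · exact hX3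

lemma og_self_of_apply_three_eq_zero {X : Fin 4 → ℝ} (h3 : X 3 = 0) :
    og X X = X 1 ^ 2 + X 2 ^ 2 := by
  simp only [og, h3]
  ring

lemma apply_one_eq_zero_and_apply_two_eq_zero_of_og_self_eq_zero {X : Fin 4 → ℝ}
    (h3 : X 3 = 0) (hnull : og X X = 0) : X 1 = 0 ∧ X 2 = 0 := by
  rw [og_self_of_apply_three_eq_zero h3] at hnull
  obtain ⟨h1, h2⟩ := (add_eq_zero_iff_of_nonneg (sq_nonneg _) (sq_nonneg _)).mp hnull
  exact ⟨pow_eq_zero_iff two_ne_zero |>.mp h1, pow_eq_zero_iff two_ne_zero |>.mp h2⟩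

theorem oscillator_parallel_null_line_field_general (a b c d : ℝ)
    (X : Fin 4 → ℝ) (hX : X = a • oP + b • oX + c • oY + d • oQ)
    (hnull : og X X = 0)
    (hpar : ∀ i : Fin 4, ∃ ω : ℝ, nab (stdv i) X = ω • X) :
    b = 0 ∧ c = 0 ∧ d = 0 := by
  obtain ⟨ω, hω⟩ := hpar 1
  have hd : X 3 = 0 := apply_three_eq_zero_of_nab_stdv_one_eq_smul hω
  obtain ⟨hb, hc⟩ := apply_one_eq_zero_and_apply_two_eq_zero_of_og_self_eq_zero hd hnull
  subst hX
  simp [oP, oX, oY, oQ, stdv] at hb hc hd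
  exact ⟨hb, hc, hd⟩

theorem oscillator_parallel_null_line_field (a b c d : ℝ)
    (X : Fin 4 → ℝ) (hX : X = a • oP + b • oX + c • oY + d • oQ)
    (hne : X ≠ 0) (hnull : og X X = 0)
    (hpar : ∀ i : Fin 4, ∃ ω : ℝ, nab (stdv i) X = ω • X) :
    b = 0 ∧ c = 0 ∧ d = 0 :=
  oscillator_parallel_null_line_field_general a b c d X hX hnull hpar
end
end

section
/- For a left-invariant vector field V = a e₁ + b e₂ + c e₃ + d e₄ on the oscillator group, the rough Laplacian satisfies ∇*∇V := Σᵢ εᵢ (∇_{eᵢ}∇_{eᵢ}V − ∇_{∇_{eᵢ}eᵢ}V) = −(1/2)(b+d) u, where u = e₂ − e₄ and ε₁=ε₂=ε₃=1, ε₄=−1. In particular ∇*∇V = 0 if and only if b = −d. -/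
noncomputable section

def oe1 : Fin 4 → ℝ := -oP + oX
def oe2 : Fin 4 → ℝ := oX + oQ
def oe3 : Fin 4 → ℝ := oY
def oe4 : Fin 4 → ℝ := -oP + oX + oQ

/-! The terms `∇_{∇ₓx} V` vanish because `∇ₓx = ½[x,x] = 0`, so the rough Laplacian is
`¼ Σ εᵢ ad(eᵢ)²`. This is the contraction of `ad ⊗ ad` with `g⁻¹`, hence basis-independent; in the
basis `P, X₁, Y₁, Q` (where `g(P,Q) = 1`) and with `P` central it is `¼ (ad(X₁)² + ad(Y₁)²)`,
which sends `V` to `-½ V_Q P`. Finally `P = e₂ - e₄` and the `Q`-coordinate of `V` is `b + d`. -/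

theorem obr_self (x : Fin 4 → ℝ) : obr x x = 0 := by
  funext j
  fin_cases j <;> simp [obr] <;> ring

theorem obr_zero_left (y : Fin 4 → ℝ) : obr 0 y = 0 := by
  funext j
  fin_cases j <;> simp [obr]

theorem nab_nab_self (x y : Fin 4 → ℝ) : nab (nab x x) y = 0 := by
  simp [nab, obr_self, obr_zero_left]

theorem oe2_sub_oe4 : oe2 - oe4 = oP := by
  simp only [oe2, oe4]
  abel

theorem oP_ne_zero : oP ≠ 0 := fun h => by
  simpa [oP, stdv] using congrFun h 0

theorem rough_laplacian_eq_smul_oP (V : Fin 4 → ℝ) :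
    (nab oe1 (nab oe1 V) - nab (nab oe1 oe1) V)
      + (nab oe2 (nab oe2 V) - nab (nab oe2 oe2) V)
      + (nab oe3 (nab oe3 V) - nab (nab oe3 oe3) V)
      - (nab oe4 (nab oe4 V) - nab (nab oe4 oe4) V)
      = (-(1/2 : ℝ) * V 3) • oP := by
  simp only [nab_nab_self, sub_zero]
  funext j
  fin_cases j <;> (simp [nab, obr, oe1, oe2, oe3, oe4, oP, oX, oY, oQ, stdv]; try ring)

theorem oscillator_rough_laplacian (a b c d : ℝ)
    (V : Fin 4 → ℝ) (hV : V = a • oe1 + b • oe2 + c • oe3 + d • oe4) :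
    (nab oe1 (nab oe1 V) - nab (nab oe1 oe1) V)
      + (nab oe2 (nab oe2 V) - nab (nab oe2 oe2) V)
      + (nab oe3 (nab oe3 V) - nab (nab oe3 oe3) V)
      - (nab oe4 (nab oe4 V) - nab (nab oe4 oe4) V)
      = (-(1/2 : ℝ) * (b + d)) • (oe2 - oe4) ∧
    ((nab oe1 (nab oe1 V) - nab (nab oe1 oe1) V)
      + (nab oe2 (nab oe2 V) - nab (nab oe2 oe2) V)
      + (nab oe3 (nab oe3 V) - nab (nab oe3 oe3) V)
      - (nab oe4 (nab oe4 V) - nab (nab oe4 oe4) V) = 0 ↔ b = -d) := by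
  have hV3 : V 3 = b + d := by
    simp [hV, oe1, oe2, oe3, oe4, oP, oX, oY, oQ, stdv]
  have key := rough_laplacian_eq_smul_oP V
  rw [hV3, ← oe2_sub_oe4] at key
  refine ⟨key, ?_⟩
  rw [key, oe2_sub_oe4, smul_eq_zero, or_iff_left oP_ne_zero, mul_eq_zero,
    or_iff_right (by norm_num), eq_neg_iff_add_eq_zero]
end
end

section
/- Every left-invariant vector field V on the oscillator group with bi-invariant metric is geodesic: ∇_V V = (1/2)[V,V] = 0; and V is parallel (∇_x V = 0 for all x) if and only if, writing V = a e₁ + b e₂ + c e₃ + d e₄, one has a = c = 0 and b = −d, i.e., V is collinear to u = e₂ − e₄. -/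
noncomputable section

theorem nab_self (x : Fin 4 → ℝ) : nab x x = 0 := by
  simp [nab, obr_self]

theorem nab_eq_zero_iff {x y : Fin 4 → ℝ} : nab x y = 0 ↔ obr x y = 0 := by
  simp [nab]

/-- The centre of the oscillator algebra is the line `ℝ P`. -/
theorem forall_obr_eq_zero_iff {v : Fin 4 → ℝ} :
    (∀ x, obr x v = 0) ↔ v 1 = 0 ∧ v 2 = 0 ∧ v 3 = 0 := by
  constructor
  · intro h
    have hQ := congrFun (h oQ)
    have hX := congrFun (h oX)
    simp only [obr, oQ, oX, stdv] at hQ hX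
    refine ⟨?_, ?_, ?_⟩
    · simpa using hQ 2
    · simpa using hQ 1
    · simpa using hX 2
  · rintro ⟨h1, h2, h3⟩ x
    ext i
    fin_cases i <;> simp [obr, h1, h2, h3]

theorem smul_oe_add_eq (a b c d : ℝ) :
    a • oe1 + b • oe2 + c • oe3 + d • oe4 = ![-(a + d), a + b + d, c, b + d] := by
  ext i
  fin_cases i <;> simp [oe1, oe2, oe3, oe4, oP, oX, oY, oQ, stdv] <;> ring

theorem oscillator_geodesic_parallel (a b c d : ℝ)
    (V : Fin 4 → ℝ) (hV : V = a • oe1 + b • oe2 + c • oe3 + d • oe4) :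
    (∀ W : Fin 4 → ℝ, nab W W = 0) ∧
    ((∀ x : Fin 4 → ℝ, nab x V = 0) ↔ (a = 0 ∧ c = 0 ∧ b = -d)) := by
  refine ⟨nab_self, ?_⟩
  simp only [nab_eq_zero_iff, forall_obr_eq_zero_iff, hV, smul_oe_add_eq, Matrix.cons_val]
  constructor
  · rintro ⟨h1, h2, h3⟩
    exact ⟨by linarith, h2, by linarith⟩
  · rintro ⟨rfl, rfl, rfl⟩
    exact ⟨by ring, rfl, by ring⟩
end
end
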